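/- Let M be a nonnegative n×n matrix and suppose D₁·M·D₂ and D₁'·M·D₂' are both doubly stochastic, where D₁, D₂, D₁', D₂' are diagonal with strictly positive diagonals. If additionally M has total support and n ≥ 1, then D₁·M·D₂ = D₁'·M·D₂' (the doubly stochastic scaling of M is unique, though the diagonal factors themselves are unique only up to a scalar). -/
import Mathlib


open Matrix

/-- Uniqueness part of the Sinkhorn–Knopp theorem: if a nonnegative matrix `M` with
total support admits two doubly stochastic scalings `D₁·M·D₂` and `D₁'·M·D₂'` by
positive diagonal matrices, then the two scalings coincide. -/
theorem sinkhorn_scaling_unique {n : ℕ} (hn : 0 < n)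
    (M : Matrix (Fin n) (Fin n) ℝ) (hnn : ∀ i j, 0 ≤ M i j)
    (hts : M ≠ 0 ∧ ∀ i j, 0 < M i j →
      ∃ δ : Equiv.Perm (Fin n), δ i = j ∧ ∀ k, 0 < M k (δ k))
    (d₁ d₂ d₁' d₂' : Fin n → ℝ)
    (hd₁ : ∀ i, 0 < d₁ i) (hd₂ : ∀ i, 0 < d₂ i)
    (hd₁' : ∀ i, 0 < d₁' i) (hd₂' : ∀ i, 0 < d₂' i)
    (h1nn : ∀ i j, 0 ≤ (Matrix.diagonal d₁ * M * Matrix.diagonal d₂) i j)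
    (h1row : ∀ i, ∑ j, (Matrix.diagonal d₁ * M * Matrix.diagonal d₂) i j = 1)
    (h1col : ∀ j, ∑ i, (Matrix.diagonal d₁ * M * Matrix.diagonal d₂) i j = 1)
    (h2nn : ∀ i j, 0 ≤ (Matrix.diagonal d₁' * M * Matrix.diagonal d₂') i j)
    (h2row : ∀ i, ∑ j, (Matrix.diagonal d₁' * M * Matrix.diagonal d₂') i j = 1)
    (h2col : ∀ j, ∑ i, (Matrix.diagonal d₁' * M * Matrix.diagonal d₂') i j = 1) :
    Matrix.diagonal d₁ * M * Matrix.diagonal d₂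
      = Matrix.diagonal d₁' * M * Matrix.diagonal d₂' := by
  have hAe : ∀ i j, (Matrix.diagonal d₁ * M * Matrix.diagonal d₂) i j
      = d₁ i * M i j * d₂ j := by
    intro i j; simp [Matrix.mul_diagonal, Matrix.diagonal_mul]
  have hBe : ∀ i j, (Matrix.diagonal d₁' * M * Matrix.diagonal d₂') i j
      = d₁' i * M i j * d₂' j := by
    intro i j; simp [Matrix.mul_diagonal, Matrix.diagonal_mul]
  set a : Fin n → Fin n → ℝ := fun i j => d₁ i * M i j * d₂ j with ha
  set b : Fin n → Fin n → ℝ := fun i j => d₁' i * M i j * d₂' j with hb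
  set L : Fin n → Fin n → ℝ :=
    fun i j => Real.log (d₁' i / d₁ i) + Real.log (d₂' j / d₂ j) with hL
  have harow : ∀ i, ∑ j, a i j = 1 := fun i => by
    rw [← h1row i]; exact Finset.sum_congr rfl fun j _ => (hAe i j).symm
  have hacol : ∀ j, ∑ i, a i j = 1 := fun j => by
    rw [← h1col j]; exact Finset.sum_congr rfl fun i _ => (hAe i j).symm
  have hbrow : ∀ i, ∑ j, b i j = 1 := fun i => by
    rw [← h2row i]; exact Finset.sum_congr rfl fun j _ => (hBe i j).symm
  have hbcol : ∀ j, ∑ i, b i j = 1 := fun j => by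
    rw [← h2col j]; exact Finset.sum_congr rfl fun i _ => (hBe i j).symm
  -- expansion of ∑∑ c·L for doubly stochastic c
  have expand : ∀ (c : Fin n → Fin n → ℝ), (∀ i, ∑ j, c i j = 1) →
      (∀ j, ∑ i, c i j = 1) →
      ∑ i, ∑ j, c i j * L i j
        = (∑ i, Real.log (d₁' i / d₁ i)) + (∑ j, Real.log (d₂' j / d₂ j)) := by
    intro c hr hc
    have step : ∑ i, ∑ j, c i j * L i j
        = ∑ i, ∑ j, (c i j * Real.log (d₁' i / d₁ i)
            + c i j * Real.log (d₂' j / d₂ j)) := by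
      refine Finset.sum_congr rfl fun i _ => Finset.sum_congr rfl fun j _ => ?_
      simp only [hL]; ring
    rw [step]
    have s1 : ∑ i, ∑ j, c i j * Real.log (d₁' i / d₁ i)
        = ∑ i, Real.log (d₁' i / d₁ i) := by
      refine Finset.sum_congr rfl fun i _ => ?_
      rw [← Finset.sum_mul, hr i, one_mul]
    have s2 : ∑ i, ∑ j, c i j * Real.log (d₂' j / d₂ j)
        = ∑ j, Real.log (d₂' j / d₂ j) := by
      rw [Finset.sum_comm]
      refine Finset.sum_congr rfl fun j _ => ?_
      rw [← Finset.sum_mul, hc j, one_mul]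
    simp only [Finset.sum_add_distrib, s1, s2]
  have hsum : ∑ i, ∑ j, (b i j - a i j) * L i j = 0 := by
    have e1 := expand a harow hacol
    have e2 := expand b hbrow hbcol
    have : ∑ i, ∑ j, (b i j - a i j) * L i j
        = (∑ i, ∑ j, b i j * L i j) - (∑ i, ∑ j, a i j * L i j) := by
      rw [← Finset.sum_sub_distrib]
      refine Finset.sum_congr rfl fun i _ => ?_
      rw [← Finset.sum_sub_distrib]
      exact Finset.sum_congr rfl fun j _ => by ring
    rw [this, e1, e2, sub_self]
  -- each term is nonnegative
  have hLeq : ∀ i j, 0 < M i j → L i j = Real.log (b i j) - Real.log (a i j) := by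
    intro i j h
    simp only [hL, ha, hb]
    rw [Real.log_div (hd₁' i).ne' (hd₁ i).ne', Real.log_div (hd₂' j).ne' (hd₂ j).ne',
        Real.log_mul (mul_ne_zero (hd₁' i).ne' h.ne') (hd₂' j).ne', Real.log_mul (hd₁' i).ne' h.ne',
        Real.log_mul (mul_ne_zero (hd₁ i).ne' h.ne') (hd₂ j).ne', Real.log_mul (hd₁ i).ne' h.ne']
    ring
  have hterm : ∀ i j, 0 ≤ (b i j - a i j) * L i j := by
    intro i j
    rcases eq_or_lt_of_le (hnn i j) with h | h
    · have haz : a i j = 0 := by simp [ha, ← h]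
      have hbz : b i j = 0 := by simp [hb, ← h]
      simp [haz, hbz]
    · have ha0 : 0 < a i j := mul_pos (mul_pos (hd₁ i) h) (hd₂ j)
      have hb0 : 0 < b i j := mul_pos (mul_pos (hd₁' i) h) (hd₂' j)
      rw [hLeq i j h]
      rcases le_total (a i j) (b i j) with hle | hle
      · exact mul_nonneg (sub_nonneg.2 hle)
          (sub_nonneg.2 (Real.log_le_log ha0 hle))
      · nlinarith [sub_nonpos.2 hle, sub_nonpos.2 (Real.log_le_log hb0 hle)]
  have hzero : ∀ i j, (b i j - a i j) * L i j = 0 := by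
    intro i j
    have h1 : ∀ i ∈ (Finset.univ : Finset (Fin n)),
        0 ≤ ∑ j, (b i j - a i j) * L i j := fun i _ =>
      Finset.sum_nonneg fun j _ => hterm i j
    have h2 := (Finset.sum_eq_zero_iff_of_nonneg h1).1 hsum i (Finset.mem_univ i)
    exact (Finset.sum_eq_zero_iff_of_nonneg fun j _ => hterm i j).1 h2 j
      (Finset.mem_univ j)
  ext i j
  rw [hAe, hBe]
  rcases eq_or_lt_of_le (hnn i j) with h | h
  · simp [← h]
  · by_contra hne
    have ha0 : 0 < a i j := mul_pos (mul_pos (hd₁ i) h) (hd₂ j)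
    have hb0 : 0 < b i j := mul_pos (mul_pos (hd₁' i) h) (hd₂' j)
    have hne' : a i j ≠ b i j := hne
    have key := hzero i j
    rw [hLeq i j h] at key
    rcases lt_or_gt_of_ne hne' with hlt | hlt
    · have := mul_pos (sub_pos.2 hlt) (sub_pos.2 (Real.log_lt_log ha0 hlt))
      linarith [key, this]
    · have := mul_pos_of_neg_of_neg (sub_neg.2 hlt)
        (sub_neg.2 (Real.log_lt_log hb0 hlt))
      linarith [key, this]
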